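/- The Grünwald–Durrmeyer operators reproduce constants: for every n ≥ 1 and every θ ∈ [0, π], D_n(1)(θ) = 1, where D_n(f)(θ) = (n/π)·∑_{k=1}^n S_{k,n}(θ)·∫₀^π f(t)·S_{k,n}(t) dt. -/

import Mathlib

open Real MeasureTheory Set Filter

/-- Chebyshev angles `θ_k = (2k-1)π/(2n)`. -/
noncomputable def cheb (n k : ℕ) : ℝ := (2 * (k : ℝ) - 1) * π / (2 * n)

/-- Fundamental Lagrange polynomials at Chebyshev nodes, in the angular
variable, extended continuously through the removable singularities. -/
noncomputable def P (n k : ℕ) (t : ℝ) : ℝ :=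
  if Real.cos t = Real.cos (cheb n k) then
    (-1) ^ (k + 1) * Real.sin (n * t) * Real.sin (cheb n k) / Real.sin t
  else
    (-1) ^ (k + 1) * Real.cos (n * t) * Real.sin (cheb n k) /
      (n * (Real.cos t - Real.cos (cheb n k)))

/-- `S_{k,n}(t) = (P_k(t - π/(2n)) + P_k(t + π/(2n)))/2`. -/
noncomputable def S (n k : ℕ) (t : ℝ) : ℝ :=
  (P n k (t - π / (2 * n)) + P n k (t + π / (2 * n))) / 2

/-- The Grünwald–Durrmeyer operator. -/
noncomputable def D (n : ℕ) (f : ℝ → ℝ) (θ : ℝ) : ℝ :=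
  (n / π) * ∑ k ∈ Finset.Icc 1 n, S n k θ * ∫ t in (0:ℝ)..π, f t * S n k t


/-!
In the cosine basis, `P n k t = (1 + 2 ∑_{0<j<n} cos (j θ_k) cos (j t)) / n`: off the singular
set this is the Christoffel–Darboux identity at a node (where `cos (n θ_k) = 0`), and on it both
sides equal `1` by discrete orthogonality of the cosines at the nodes. Averaging the shifts
`t ± π/(2n)` only multiplies the `j`-th coefficient by `cos (j π/(2n))`. Hence `∫₀^π S_{k,n} = π/n`,
since only the constant term survives, and `∑_k S_{k,n}(θ) = 1`, since `∑_k cos (j θ_k) = 0` for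
`0 < j < n`. Therefore `D_n(1)(θ) = (n/π) (π/n) ∑_k S_{k,n}(θ) = 1`.
-/

open Finset

lemma two_mul_sin_mul_sum_range_cos (a b : ℝ) (m : ℕ) :
    2 * sin b * ∑ i ∈ range m, cos (a + (2 * i + 1) * b) = sin (a + 2 * m * b) - sin a := by
  induction m with
  | zero => simp
  | succ m ih =>
    rw [sum_range_succ, mul_add, ih]
    have h₁ : a + 2 * ↑(m + 1) * b = a + (2 * m + 1) * b + b := by push_cast; ring
    have h₂ : a + 2 * m * b = a + (2 * m + 1) * b - b := by ring
    rw [h₁, h₂, sin_add, sin_sub]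
    ring

/-- Christoffel–Darboux identity for the cosine kernel. -/
lemma cos_sub_cos_mul_sum_range_cos_mul_cos (s t : ℝ) (n : ℕ) :
    (cos t - cos s) * (2 * ∑ j ∈ range (n + 1), cos (j * s) * cos (j * t) - 1) =
      cos ((n + 1) * t) * cos (n * s) - cos (n * t) * cos ((n + 1) * s) := by
  induction n with
  | zero => simp; ring
  | succ n ih =>
    have step (x y : ℝ) : cos (x + t) * cos y - cos x * cos (y + s)
        = cos x * cos (y - s) - cos (x - t) * cos y + (cos t - cos s) * (2 * (cos y * cos x)) := by
      rw [cos_add, cos_add, cos_sub, cos_sub]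
      ring
    have hx : ((n + 1 : ℕ) + 1 : ℝ) * t = (n + 1) * t + t := by push_cast; ring
    have hy : ((n + 1 : ℕ) + 1 : ℝ) * s = (n + 1) * s + s := by push_cast; ring
    have hx' : ((n + 1 : ℕ) : ℝ) * t = (n + 1) * t := by push_cast; ring
    have hy' : ((n + 1 : ℕ) : ℝ) * s = (n + 1) * s := by push_cast; ring
    have hx₀ : (n : ℝ) * t = (n + 1) * t - t := by ring
    have hy₀ : (n : ℝ) * s = (n + 1) * s - s := by ring
    rw [sum_range_succ, hx, hy, hx', hy']
    rw [hx₀, hy₀] at ih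
    linear_combination ih - step ((n + 1) * t) ((n + 1) * s)

lemma cos_natCast_mul_eq_of_cos_eq {s t : ℝ} (h : cos t = cos s) (n : ℕ) :
    cos (n * t) = cos (n * s) := by
  simpa using congrArg (Polynomial.Chebyshev.T ℝ n).eval h

lemma sin_natCast_mul_mul_sin_eq_of_cos_eq {s t : ℝ} (h : cos t = cos s) (n : ℕ) :
    sin (n * t) * sin s = sin (n * s) * sin t := by
  have hU := congrArg (Polynomial.Chebyshev.U ℝ ((n : ℤ) - 1)).eval h
  have ht := Polynomial.Chebyshev.U_real_cos t ((n : ℤ) - 1)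
  have hs := Polynomial.Chebyshev.U_real_cos s ((n : ℤ) - 1)
  push_cast at ht hs
  rw [sub_add_cancel] at ht hs
  rw [← ht, ← hs, hU]
  ring

lemma integral_cos_natCast_mul (j : ℕ) :
    ∫ t in (0 : ℝ)..π, cos (j * t) = if j = 0 then π else 0 := by
  split_ifs with hj
  · simp [hj]
  · have hj' : (j : ℝ) ≠ 0 := Nat.cast_ne_zero.mpr hj
    rw [intervalIntegral.integral_comp_mul_left cos hj', integral_cos, mul_zero, sin_zero,
      sin_nat_mul_pi, sub_zero, smul_zero]

section ChebyshevNodes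

variable {n k : ℕ}

lemma cheb_mem_Ioo (hk : 1 ≤ k) (hkn : k ≤ n) : cheb n k ∈ Ioo 0 π := by
  have hk' : (1 : ℝ) ≤ k := by exact_mod_cast hk
  have hkn' : (k : ℝ) ≤ n := by exact_mod_cast hkn
  have hn : (0 : ℝ) < 2 * n := by linarith
  constructor
  · exact div_pos (mul_pos (by linarith) pi_pos) hn
  · rw [cheb, div_lt_iff₀ hn]
    nlinarith [pi_pos]

lemma sin_cheb_pos (hk : 1 ≤ k) (hkn : k ≤ n) : 0 < sin (cheb n k) :=
  sin_pos_of_pos_of_lt_pi (cheb_mem_Ioo hk hkn).1 (cheb_mem_Ioo hk hkn).2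

lemma natCast_mul_cheb (hn : n ≠ 0) : n * cheb n k = k * π - π / 2 := by
  rw [cheb]
  field_simp

lemma cos_natCast_mul_cheb (hn : n ≠ 0) : cos (n * cheb n k) = 0 := by
  rw [natCast_mul_cheb hn, cos_sub_pi_div_two, sin_nat_mul_pi]

lemma sin_natCast_mul_cheb (hn : n ≠ 0) : sin (n * cheb n k) = (-1) ^ (k + 1) := by
  rw [natCast_mul_cheb hn, sin_sub_pi_div_two, cos_nat_mul_pi, pow_succ]
  ring

lemma sum_Icc_cos_natCast_mul_cheb {j : ℕ} (hj : j < n) :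
    ∑ k ∈ Icc 1 n, cos (j * cheb n k) = if j = 0 then (n : ℝ) else 0 := by
  split_ifs with hj0
  · simp [hj0]
  have hj' : (0 : ℝ) < j := Nat.cast_pos.mpr (Nat.pos_of_ne_zero hj0)
  have hjn : (j : ℝ) < n := by exact_mod_cast hj
  have hn : (0 : ℝ) < n := hj'.trans hjn
  have hb : 0 < sin (j * π / (2 * n)) := by
    apply sin_pos_of_pos_of_lt_pi (by positivity)
    rw [div_lt_iff₀ (by positivity)]
    nlinarith [pi_pos]
  have hnodes : ∑ k ∈ Icc 1 n, cos (j * cheb n k) =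
      ∑ i ∈ range n, cos (0 + (2 * i + 1) * (j * π / (2 * n))) := by
    rw [← Finset.Ico_add_one_right_eq_Icc, sum_Ico_eq_sum_range, Nat.add_sub_cancel]
    refine sum_congr rfl fun i _ => ?_
    rw [cheb, zero_add]
    congr 1
    push_cast
    ring
  have h := two_mul_sin_mul_sum_range_cos 0 (j * π / (2 * n)) n
  rw [zero_add, show 2 * (n : ℝ) * (j * π / (2 * n)) = j * π by field_simp, sin_nat_mul_pi,
    sin_zero, sub_zero, mul_eq_zero] at h
  rw [hnodes]
  exact h.resolve_left (by positivity)

lemma two_mul_sum_range_cos_mul_cheb_sq_sub_one (hk : 1 ≤ k) (hkn : k ≤ n) :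
    2 * ∑ j ∈ range n, cos (j * cheb n k) ^ 2 - 1 = n := by
  set θ := cheb n k
  have hs := sin_cheb_pos hk hkn
  have hdouble : ∑ j ∈ range n, cos (2 * (j * θ)) = 1 := by
    have h := two_mul_sin_mul_sum_range_cos (-θ) θ n
    have hend : -θ + 2 * n * θ = (2 * k - 1 : ℕ) * π - θ := by
      rw [mul_assoc, natCast_mul_cheb (by omega), Nat.cast_sub (by omega)]
      push_cast
      ring
    rw [hend, sin_nat_mul_pi_sub, sin_neg, Odd.neg_one_pow ⟨k - 1, by omega⟩] at h
    simp_rw [show ∀ i : ℕ, -θ + (2 * i + 1) * θ = 2 * (i * θ) by intro i; ring] at h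
    exact mul_left_cancel₀ (by positivity) (h.trans (by ring))
  simp_rw [cos_sq]
  rw [sum_add_distrib, ← sum_div, ← sum_div, hdouble, sum_const, card_range, nsmul_eq_mul]
  ring

end ChebyshevNodes

section LagrangeBasis

variable {n k : ℕ}

lemma P_eq_sum_cos (hk : 1 ≤ k) (hkn : k ≤ n) (t : ℝ) :
    P n k t = (2 * ∑ j ∈ range n, cos (j * cheb n k) * cos (j * t) - 1) / n := by
  set θ := cheb n k
  have hn : (n : ℝ) ≠ 0 := Nat.cast_ne_zero.mpr (by omega)
  by_cases hct : cos t = cos θ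
  · rw [P, if_pos hct]
    have hsθ := sin_cheb_pos hk hkn
    have hsign : ((-1 : ℝ) ^ (k + 1)) ^ 2 = 1 := by
      rw [← pow_mul]
      exact Even.neg_one_pow ⟨k + 1, by ring⟩
    have hst : sin t ≠ 0 := by
      intro h
      have := sin_sq_add_cos_sq t
      rw [h, hct, ← sin_sq_add_cos_sq θ] at this
      nlinarith
    have hnum := sin_natCast_mul_mul_sin_eq_of_cos_eq hct n
    rw [sin_natCast_mul_cheb (by omega)] at hnum
    simp_rw [cos_natCast_mul_eq_of_cos_eq hct, ← sq]
    rw [two_mul_sum_range_cos_mul_cheb_sq_sub_one hk hkn]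
    field_simp
    linear_combination (-1 : ℝ) ^ (k + 1) * hnum + sin t * hsign
  · rw [P, if_neg hct, div_eq_div_iff (mul_ne_zero hn (sub_ne_zero.mpr hct)) hn]
    have hcd := cos_sub_cos_mul_sum_range_cos_mul_cos θ t (n - 1)
    have hn1 : ((n - 1 : ℕ) : ℝ) + 1 = n := by rw [Nat.cast_sub (by omega)]; ring
    have hprev : cos ((n - 1 : ℕ) * θ) = (-1) ^ (k + 1) * sin θ := by
      rw [show ((n - 1 : ℕ) : ℝ) * θ = n * θ - θ by rw [← hn1]; ring, cos_sub,
        cos_natCast_mul_cheb (by omega), sin_natCast_mul_cheb (by omega)]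
      ring
    rw [Nat.sub_add_cancel (by omega), hn1, cos_natCast_mul_cheb (by omega), hprev] at hcd
    linear_combination (-1 : ℝ) * n * hcd

lemma S_eq_sum_cos (hk : 1 ≤ k) (hkn : k ≤ n) (t : ℝ) :
    S n k t =
      (2 * ∑ j ∈ range n, cos (j * cheb n k) * cos (j * (π / (2 * n))) * cos (j * t) - 1) / n := by
  have hsum : ∑ j ∈ range n, cos (j * cheb n k) * cos (j * (t - π / (2 * n))) +
      ∑ j ∈ range n, cos (j * cheb n k) * cos (j * (t + π / (2 * n))) =
      2 * ∑ j ∈ range n, cos (j * cheb n k) * cos (j * (π / (2 * n))) * cos (j * t) := by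
    rw [← sum_add_distrib, mul_sum]
    refine sum_congr rfl fun j _ => ?_
    rw [mul_sub, mul_add, cos_sub, cos_add]
    ring
  rw [S, P_eq_sum_cos hk hkn, P_eq_sum_cos hk hkn]
  linear_combination hsum / n

lemma integral_S (hk : 1 ≤ k) (hkn : k ≤ n) : ∫ t in (0 : ℝ)..π, S n k t = π / n := by
  have hn : 0 < n := by omega
  simp only [S_eq_sum_cos hk hkn]
  rw [intervalIntegral.integral_div,
    intervalIntegral.integral_sub (Continuous.intervalIntegrable (by fun_prop) _ _) (by simp),
    intervalIntegral.integral_const_mul, intervalIntegral.integral_finsetSum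
      (fun j _ => Continuous.intervalIntegrable (by fun_prop) _ _)]
  simp only [intervalIntegral.integral_const_mul, integral_cos_natCast_mul, mul_ite, mul_zero,
    sum_ite_eq', Finset.mem_range, if_pos hn]
  simp only [CharP.cast_eq_zero, zero_mul, cos_zero, mul_one, intervalIntegral.integral_const,
    sub_zero, smul_eq_mul]
  ring

lemma sum_S_eq_one (hn : 1 ≤ n) (θ : ℝ) : ∑ k ∈ Icc 1 n, S n k θ = 1 := by
  have hn' : (n : ℝ) ≠ 0 := Nat.cast_ne_zero.mpr (by omega)
  rw [sum_congr rfl fun k hk => S_eq_sum_cos (mem_Icc.mp hk).1 (mem_Icc.mp hk).2 θ, ← sum_div,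
    sum_sub_distrib, ← mul_sum, sum_comm]
  have hinner (j : ℕ) (hj : j ∈ range n) : ∑ k ∈ Icc 1 n,
      cos (j * cheb n k) * cos (j * (π / (2 * n))) * cos (j * θ) =
      if j = 0 then (n : ℝ) else 0 := by
    simp_rw [mul_assoc]
    rw [← sum_mul, sum_Icc_cos_natCast_mul_cheb (mem_range.mp hj)]
    split_ifs with hj0 <;> simp [hj0]
  rw [sum_congr rfl hinner, sum_ite_eq', if_pos (mem_range.mpr hn), sum_const, Nat.card_Icc, Nat.add_sub_cancel, nsmul_one]
  field_simp
  ring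

end LagrangeBasis

theorem D_one_general (n : ℕ) (hn : 1 ≤ n) (θ : ℝ) :
    D n (fun _ => (1:ℝ)) θ = 1 := by
  have hn' : (n : ℝ) ≠ 0 := Nat.cast_ne_zero.mpr (by omega)
  have hint : ∀ k ∈ Finset.Icc 1 n, S n k θ * ∫ t in (0 : ℝ)..π, (fun _ => (1 : ℝ)) t * S n k t =
      S n k θ * (π / n) := fun k hk => by
    simp only [one_mul, integral_S (Finset.mem_Icc.mp hk).1 (Finset.mem_Icc.mp hk).2]
  rw [D, sum_congr rfl hint, ← sum_mul, sum_S_eq_one hn]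
  field_simp

/-- The Grünwald–Durrmeyer operators reproduce constants: `D_n(1) = 1`. -/
theorem D_one (n : ℕ) (hn : 1 ≤ n) (θ : ℝ) (hθ : θ ∈ Set.Icc 0 π) :
    D n (fun _ => (1:ℝ)) θ = 1 :=
  D_one_general n hn θ
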